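/- Fix integers d ≥ 1, p ≥ 2, and n ≥ t ≥ 1, a real Γ > 0, and a database S ∈ (X^d)^n. If L(0, S) < t − 2Γ, then there exists r ∈ { j/(2p) : j ∈ ℕ, 0 ≤ j ≤ 2p·⌈√d⌉ } such that min{ t − L(r/2, S), L(r, S) − t + 4Γ } ≥ 2Γ. -/

import Mathlib

/-- Number of entries of the database `S` inside the closed ball of radius `r` around `x`. -/
noncomputable def ballCount {d n : ℕ} (S : Fin n → EuclideanSpace ℝ (Fin d))
    (x : EuclideanSpace ℝ (Fin d)) (r : ℝ) : ℕ :=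
  Nat.card {i : Fin n // dist (S i) x ≤ r}

/-- `B̄_r(x,S) = min{B_r(x,S), t}`, with value `0` for `r < 0`. -/
noncomputable def cappedBallCount {d n : ℕ} (t : ℕ) (S : Fin n → EuclideanSpace ℝ (Fin d))
    (r : ℝ) (x : EuclideanSpace ℝ (Fin d)) : ℕ :=
  if r < 0 then 0 else min (ballCount S x r) t

/-- `L(r,S)`: the average of the `t` largest values of `B̄_r(x_i, S)` over `t` distinct
indices `i`, i.e. `(1/t)` times the maximum over sets `I` of `t` distinct indices of
`∑_{i ∈ I} B̄_r(x_i, S)`. -/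
noncomputable def Lfun {d n : ℕ} (t : ℕ) (S : Fin n → EuclideanSpace ℝ (Fin d)) (r : ℝ) : ℝ :=
  (((Finset.univ.powersetCard t).sup fun I : Finset (Fin n) =>
      ∑ i ∈ I, cappedBallCount t S r (S i) : ℕ) : ℝ) / t

/-- The grid `X = {0, 1/(p-1), …, 1} ⊆ ℝ` with `p ≥ 2` equally spaced points. -/
def gridSet (p : ℕ) : Set ℝ := {x : ℝ | ∃ j : ℕ, j ≤ p - 1 ∧ x = (j : ℝ) / ((p : ℝ) - 1)}

/-! Since `L(·, S)` is monotone, is constant below the minimal distance `1/(p-1)` of grid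
points, and reaches `t` at the diameter `√d` of the cube, the first point `j/(2p)` of the grid
of step `1/(2p)` at which `L` reaches `t - 2Γ` works: `j/(4p)` is either below `1/(p-1)` or
at most the previous grid point `(j-1)/(2p)`. -/

open Set

theorem exists_first_crossing_on_grid {L : ℝ → ℝ} (hL : Monotone L) {m c : ℝ} (hm : 0 ≤ m)
    {J : ℕ} (hstart : L (1 / m / 2) < c) (hend : c ≤ L (J / m)) :
    ∃ j ≤ J, L (j / m / 2) < c ∧ c ≤ L (j / m) := by
  classical
  have hex : ∃ j : ℕ, c ≤ L (j / m) := ⟨J, hend⟩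
  set j := Nat.find hex
  refine ⟨j, Nat.find_min' hex hend, ?_, Nat.find_spec hex⟩
  obtain hj | hj := le_or_gt j 1
  · refine (hL ?_).trans_lt hstart
    gcongr
    exact_mod_cast hj
  · have hprev : ¬c ≤ L ((j - 1 : ℕ) / m) := Nat.find_min hex (by omega)
    refine (hL ?_).trans_lt (not_le.1 hprev)
    have hj2 : (2 : ℝ) ≤ j := by exact_mod_cast hj
    rw [div_right_comm, Nat.cast_sub hj.le, Nat.cast_one]
    gcongr
    linarith

theorem dist_le_sqrt_card_of_mem_Icc {ι : Type*} [Fintype ι] {x y : EuclideanSpace ℝ ι}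
    (hx : ∀ i, x i ∈ Icc 0 1) (hy : ∀ i, y i ∈ Icc 0 1) :
    dist x y ≤ √(Fintype.card ι) := by
  rw [EuclideanSpace.dist_eq]
  gcongr
  calc ∑ i, dist (x i) (y i) ^ 2 ≤ ∑ _i : ι, (1 : ℝ) := by
        gcongr with i
        exact pow_le_one₀ dist_nonneg (Real.dist_le_of_mem_Icc_01 (hx i) (hy i))
    _ = Fintype.card ι := by simp

theorem gridSet_subset_Icc {p : ℕ} (hp : 1 ≤ p) : gridSet p ⊆ Icc 0 1 := by
  rintro _ ⟨j, hj, rfl⟩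
  have hjp : (j : ℝ) ≤ (p : ℝ) - 1 := by
    rw [← Nat.cast_one, ← Nat.cast_sub hp]
    exact_mod_cast hj
  have hj₀ : (0 : ℝ) ≤ j := j.cast_nonneg
  exact ⟨div_nonneg hj₀ (hj₀.trans hjp), div_le_one_of_le₀ hjp (hj₀.trans hjp)⟩

theorem one_div_le_abs_sub_of_mem_gridSet {p : ℕ} (hp : 2 ≤ p) {a b : ℝ} (ha : a ∈ gridSet p)
    (hb : b ∈ gridSet p) (hab : a ≠ b) : 1 / ((p : ℝ) - 1) ≤ |a - b| := by
  obtain ⟨j₁, -, rfl⟩ := ha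
  obtain ⟨j₂, -, rfl⟩ := hb
  have hq : (0 : ℝ) < (p : ℝ) - 1 := by
    have : (2 : ℝ) ≤ p := by exact_mod_cast hp
    linarith
  have hj : j₁ ≠ j₂ := by rintro rfl; exact hab rfl
  have hgap : (1 : ℝ) ≤ |(j₁ : ℝ) - j₂| := by
    have h := Int.one_le_abs (sub_ne_zero.2 (Nat.cast_injective.ne hj) : (j₁ : ℤ) - j₂ ≠ 0)
    exact_mod_cast h
  rw [← sub_div, abs_div, abs_of_pos hq]
  gcongr

theorem one_div_le_dist_of_mem_gridSet {p : ℕ} (hp : 2 ≤ p) {ι : Type*} [Fintype ι]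
    {x y : EuclideanSpace ℝ ι} (hx : ∀ i, x i ∈ gridSet p) (hy : ∀ i, y i ∈ gridSet p)
    (hxy : x ≠ y) : 1 / ((p : ℝ) - 1) ≤ dist x y := by
  obtain ⟨i, hi⟩ : ∃ i, x i ≠ y i := by
    by_contra! h
    exact hxy (PiLp.ext h)
  calc 1 / ((p : ℝ) - 1) ≤ |x i - y i| := one_div_le_abs_sub_of_mem_gridSet hp (hx i) (hy i) hi
    _ = dist (x i) (y i) := (Real.dist_eq _ _).symm
    _ ≤ dist x y := PiLp.dist_apply_le x y i

section Database

variable {d n : ℕ} (t : ℕ) (S : Fin n → EuclideanSpace ℝ (Fin d))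

theorem ballCount_mono (x : EuclideanSpace ℝ (Fin d)) : Monotone (ballCount S x) :=
  fun _ _ h => Nat.card_mono (Set.toFinite _) fun _ hi => le_trans hi h

theorem cappedBallCount_mono (x : EuclideanSpace ℝ (Fin d)) :
    Monotone fun r => cappedBallCount t S r x := by
  intro r₁ r₂ h
  dsimp only [cappedBallCount]
  split_ifs with h₁ h₂
  · exact le_rfl
  · exact Nat.zero_le _
  · linarith
  · exact min_le_min_right t (ballCount_mono S x h)

theorem Lfun_mono : Monotone (Lfun t S) := by
  intro r₁ r₂ h
  unfold Lfun
  gcongr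
  exact cappedBallCount_mono t S _ h

theorem ballCount_eq_of_forall_dist_le {x : EuclideanSpace ℝ (Fin d)} {r : ℝ}
    (h : ∀ i, dist (S i) x ≤ r) : ballCount S x r = n := by
  rw [ballCount, Nat.card_congr (Equiv.subtypeUnivEquiv h), Nat.card_eq_fintype_card,
    Fintype.card_fin]

theorem natCast_le_Lfun {r : ℝ} (htn : t ≤ n) (hr : 0 ≤ r)
    (h : ∀ i, t ≤ ballCount S (S i) r) : (t : ℝ) ≤ Lfun t S r := by
  obtain rfl | ht := t.eq_zero_or_pos
  · simp [Lfun]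
  obtain ⟨I, -, hI⟩ := Finset.exists_subset_card_eq (s := (Finset.univ : Finset (Fin n)))
    (by simpa using htn)
  have hcap : ∀ i, cappedBallCount t S r (S i) = t := fun i => by
    simp [cappedBallCount, hr.not_gt, h i]
  have hsum : ∑ i ∈ I, cappedBallCount t S r (S i) = t * t := by simp [hcap, hI]
  have hsup : t * t ≤ (Finset.univ.powersetCard t).sup fun I : Finset (Fin n) =>
      ∑ i ∈ I, cappedBallCount t S r (S i) :=
    hsum ▸ Finset.le_sup (f := fun I : Finset (Fin n) => ∑ i ∈ I, cappedBallCount t S r (S i))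
      (Finset.mem_powersetCard.2 ⟨Finset.subset_univ I, hI⟩)
  rw [Lfun, le_div_iff₀ (by exact_mod_cast ht)]
  exact_mod_cast hsup

theorem ballCount_eq_ballCount_zero {x : EuclideanSpace ℝ (Fin d)} {r : ℝ} (hr : 0 ≤ r)
    (hsep : ∀ i, dist (S i) x ≤ r → S i = x) : ballCount S x r = ballCount S x 0 :=
  Nat.card_congr <| Equiv.subtypeEquivRight fun i =>
    ⟨fun hi => by rw [hsep i hi, dist_self], fun hi => hi.trans hr⟩

theorem Lfun_eq_Lfun_zero {r : ℝ} (hr : 0 ≤ r)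
    (hsep : ∀ i k, dist (S i) (S k) ≤ r → S i = S k) : Lfun t S r = Lfun t S 0 := by
  have hball : ∀ k, ballCount S (S k) r = ballCount S (S k) 0 := fun k =>
    ballCount_eq_ballCount_zero S hr fun i => hsep i k
  simp only [Lfun, cappedBallCount, hr.not_gt, lt_irrefl, if_false, hball]

theorem Lfun_eq_Lfun_zero_of_mem_gridSet {p : ℕ} (hp : 2 ≤ p) (hS : ∀ i c, S i c ∈ gridSet p)
    {r : ℝ} (hr₀ : 0 ≤ r) (hr : r < 1 / ((p : ℝ) - 1)) : Lfun t S r = Lfun t S 0 :=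
  Lfun_eq_Lfun_zero t S hr₀ fun i k hik => by
    by_contra hne
    exact (hik.trans_lt hr).not_ge (one_div_le_dist_of_mem_gridSet hp (hS i) (hS k) hne)

theorem natCast_le_Lfun_of_sqrt_le (htn : t ≤ n) (hS : ∀ i c, S i c ∈ Icc 0 1) {r : ℝ}
    (hr : √d ≤ r) : (t : ℝ) ≤ Lfun t S r :=
  natCast_le_Lfun t S htn ((Real.sqrt_nonneg _).trans hr) fun k =>
    htn.trans (ballCount_eq_of_forall_dist_le S fun i =>
      (Fintype.card_fin d ▸ dist_le_sqrt_card_of_mem_Icc (hS i) (hS k)).trans hr).ge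

end Database

theorem good_radius_exists_general (d p n t : ℕ) (hp : 2 ≤ p) (htn : t ≤ n)
    (Γ : ℝ) (hΓ : 0 < Γ)
    (S : Fin n → EuclideanSpace ℝ (Fin d)) (hS : ∀ i j, S i j ∈ gridSet p)
    (h0 : Lfun t S 0 < (t : ℝ) - 2 * Γ) :
    ∃ j : ℕ, j ≤ 2 * p * ⌈Real.sqrt d⌉₊ ∧
      2 * Γ ≤ min ((t : ℝ) - Lfun t S (((j : ℝ) / (2 * p)) / 2))
        (Lfun t S ((j : ℝ) / (2 * p)) - t + 4 * Γ) := by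
  have hp' : (2 : ℝ) ≤ p := by exact_mod_cast hp
  have hstart : Lfun t S (1 / (2 * p) / 2) < t - 2 * Γ := by
    rwa [Lfun_eq_Lfun_zero_of_mem_gridSet t S hp hS (by positivity)]
    rw [div_div, one_div_lt_one_div (by positivity) (by linarith)]
    linarith
  have hend : (t : ℝ) - 2 * Γ ≤ Lfun t S ((2 * p * ⌈√d⌉₊ : ℕ) / (2 * p)) := by
    have hR : ((2 * p * ⌈√d⌉₊ : ℕ) : ℝ) / (2 * p) = ⌈√d⌉₊ := by
      push_cast
      field_simp
    have := natCast_le_Lfun_of_sqrt_le t S htn (fun i c => gridSet_subset_Icc (by omega) (hS i c))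
      (hR ▸ Nat.le_ceil _ : √d ≤ ((2 * p * ⌈√d⌉₊ : ℕ) : ℝ) / (2 * p))
    linarith
  obtain ⟨j, hjJ, hhalf, hfull⟩ :=
    exists_first_crossing_on_grid (Lfun_mono t S) (by positivity) hstart hend
  exact ⟨j, hjJ, le_min (by linarith) (by linarith)⟩

theorem good_radius_exists (d p n t : ℕ) (hd : 1 ≤ d) (hp : 2 ≤ p) (ht : 1 ≤ t) (htn : t ≤ n)
    (Γ : ℝ) (hΓ : 0 < Γ)
    (S : Fin n → EuclideanSpace ℝ (Fin d)) (hS : ∀ i j, S i j ∈ gridSet p)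
    (h0 : Lfun t S 0 < (t : ℝ) - 2 * Γ) :
    ∃ j : ℕ, j ≤ 2 * p * ⌈Real.sqrt d⌉₊ ∧
      2 * Γ ≤ min ((t : ℝ) - Lfun t S (((j : ℝ) / (2 * p)) / 2))
        (Lfun t S ((j : ℝ) / (2 * p)) - t + 4 * Γ) :=
  good_radius_exists_general d p n t hp htn Γ hΓ S hS h0
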